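/- Let $\sigma > 0$ and define $F_\sigma(x, y) = \frac{1}{2} + \frac{\mathrm{sgn}(y-x)}{2} \cdot \frac{\log(1 + |y-x|/\sigma)}{\log(1 + 1/\sigma)}$ for $x \in [0,1]$, $y \in [x-1, 1+x]$. Then for all $x, \tilde{x}, y, x' $ with $\mathrm{sgn}(y - x) = \mathrm{sgn}(x' - \tilde{x})$, one has $|F_\sigma(x,y) - F_\sigma(\tilde{x}, x')| \leq \frac{|y - x'| + |x - \tilde{x}|}{2\sigma \log(1 + 1/\sigma)}$. -/

import Mathlib

/-- CDF of the ASA proposal distribution with scale `σ`, centered at `x`. -/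
noncomputable def asaCDF (σ x y : ℝ) : ℝ :=
  1 / 2 + Real.sign (y - x) / 2 * (Real.log (1 + |y - x| / σ) / Real.log (1 + 1 / σ))

/-!
Since the two points lie on the same side of their centres, the difference of the CDF values is
`±(log (1 + |y - x| / σ) - log (1 + |x' - xt| / σ)) / (2 log (1 + 1/σ))`, and `log` is
1-Lipschitz on `[1, ∞)` because `log t ≤ t - 1`.
-/

namespace Real

lemma abs_sign_le_one (r : ℝ) : |sign r| ≤ 1 := by
  rcases sign_apply_eq r with h | h | h <;> simp [h]

lemma log_sub_log_le_sub {x y : ℝ} (hx : 1 ≤ x) (hxy : x ≤ y) : log y - log x ≤ y - x := by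
  have hx₀ : 0 < x := by linarith
  calc log y - log x = log (y / x) := (log_div (by linarith) hx₀.ne').symm
    _ ≤ y / x - 1 := log_le_sub_one_of_pos (div_pos (by linarith) hx₀)
    _ = (y - x) / x := by field_simp
    _ ≤ y - x := div_le_self (by linarith) hx

lemma abs_log_sub_log_le_abs_sub {x y : ℝ} (hx : 1 ≤ x) (hy : 1 ≤ y) :
    |log y - log x| ≤ |y - x| := by
  rcases le_total x y with hxy | hyx
  · rw [abs_of_nonneg (sub_nonneg.2 (log_le_log (by linarith) hxy)), abs_of_nonneg (by linarith)]
    exact log_sub_log_le_sub hx hxy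
  · rw [abs_sub_comm, abs_sub_comm y,
      abs_of_nonneg (sub_nonneg.2 (log_le_log (by linarith) hyx)), abs_of_nonneg (by linarith)]
    exact log_sub_log_le_sub hy hyx

lemma abs_log_one_add_abs_div_sub_le {σ : ℝ} (hσ : 0 < σ) (u v : ℝ) :
    |log (1 + |u| / σ) - log (1 + |v| / σ)| ≤ |u - v| / σ := by
  calc |log (1 + |u| / σ) - log (1 + |v| / σ)| ≤ |(1 + |u| / σ) - (1 + |v| / σ)| :=
        abs_log_sub_log_le_abs_sub (le_add_of_nonneg_right (by positivity))
          (le_add_of_nonneg_right (by positivity))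
    _ = |(|u| - |v|)| / σ := by
        rw [add_sub_add_left_eq_sub, div_sub_div_same, abs_div, abs_of_pos hσ]
    _ ≤ |u - v| / σ := div_le_div_of_nonneg_right (abs_abs_sub_abs_le_abs_sub u v) hσ.le

end Real

lemma asaCDF_sub_of_sign_eq {σ x y xt x' : ℝ} (hsgn : Real.sign (y - x) = Real.sign (x' - xt)) :
    asaCDF σ x y - asaCDF σ xt x' =
      Real.sign (y - x) * (Real.log (1 + |y - x| / σ) - Real.log (1 + |x' - xt| / σ)) /
        (2 * Real.log (1 + 1 / σ)) := by
  unfold asaCDF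
  rw [hsgn]
  ring

theorem stmt_5_general (σ : ℝ) (hσ : 0 < σ) (x x' y xt : ℝ)
    (hsgn : Real.sign (y - x) = Real.sign (x' - xt)) :
    |asaCDF σ x y - asaCDF σ xt x'| ≤
      (|y - x'| + |x - xt|) / (2 * σ * Real.log (1 + 1 / σ)) := by
  have hL : 0 < 2 * Real.log (1 + 1 / σ) :=
    mul_pos two_pos (Real.log_pos (lt_add_of_pos_right 1 (one_div_pos.2 hσ)))
  have hdist : |(y - x) - (x' - xt)| ≤ |y - x'| + |x - xt| := by
    rw [show (y - x) - (x' - xt) = (y - x') + (xt - x) by ring, abs_sub_comm x]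
    exact abs_add_le _ _
  rw [asaCDF_sub_of_sign_eq hsgn, abs_div, abs_mul, abs_of_pos hL,
    show 2 * σ * Real.log (1 + 1 / σ) = σ * (2 * Real.log (1 + 1 / σ)) by ring,
    ← div_div (|y - x'| + |x - xt|)]
  refine div_le_div_of_nonneg_right ?_ hL.le
  calc |Real.sign (y - x)| * |Real.log (1 + |y - x| / σ) - Real.log (1 + |x' - xt| / σ)|
      ≤ 1 * (|(y - x) - (x' - xt)| / σ) := by
        gcongr
        exacts [Real.abs_sign_le_one _, Real.abs_log_one_add_abs_div_sub_le hσ _ _]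
    _ ≤ (|y - x'| + |x - xt|) / σ := by
        rw [one_mul]
        exact div_le_div_of_nonneg_right hdist hσ.le

theorem stmt_5 (σ : ℝ) (hσ : 0 < σ) (x x' y xt : ℝ)
    (hx : x ∈ Set.Icc (0 : ℝ) 1) (hxt : xt ∈ Set.Icc (0 : ℝ) 1)
    (hy : y ∈ Set.Icc (x - 1) (1 + x)) (hx' : x' ∈ Set.Icc (xt - 1) (1 + xt))
    (hsgn : Real.sign (y - x) = Real.sign (x' - xt)) :
    |asaCDF σ x y - asaCDF σ xt x'| ≤
      (|y - x'| + |x - xt|) / (2 * σ * Real.log (1 + 1 / σ)) :=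
  stmt_5_general σ hσ x x' y xt hsgn
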